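/- arXiv:0803.4178 — 2 statements merged into one kernel-verified Lean document; each statement's English description precedes it below -/
import Mathlib

section
/- Let η_1, ..., η_n be complex numbers with multiplicities m_1, ..., m_n ≥ 1 and N = ∑ m_j, and let G(X) = ∏_{j=1}^n (X - η_j)^{m_j}. For k ≥ N, the quotient of X^k by G is Q(X) = ∑_{u=0}^{k-N} X^{k-N-u} ∑_{w_1+...+w_n=u} ∏_{l=1}^n [(w_l + m_l - 1)!/(w_l! (m_l - 1)!)] η_l^{w_l}. -/
/-!
Reversing coefficients turns division by the monic polynomial `G` of degree `N` into
multiplication by the power series inverse of `G.reverse = ∏ (1 - η_j X)^{m_j}`: the quotient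
of `X^k` by `G` is the reflection of that inverse truncated to degree `k - N`. The inverse is
`∏ rescale η_j ((1 - X)⁻¹)^{m_j}`, and `(1 - X)^{-m}` has coefficients `C(w + m - 1, w)`.
-/

open Polynomial

namespace Polynomial

theorem reverse_pow_of_domain {R : Type*} [Semiring R] [NoZeroDivisors R] (f : R[X]) (m : ℕ) :
    (f ^ m).reverse = f.reverse ^ m := by
  induction m with
  | zero => rw [pow_zero, pow_zero, ← C_1, reverse_C]
  | succ m ih => rw [pow_succ, reverse_mul_of_domain, ih, pow_succ]

theorem reverse_prod_of_domain {R ι : Type*} [CommSemiring R] [NoZeroDivisors R] (s : Finset ι)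
    (f : ι → R[X]) : (∏ i ∈ s, f i).reverse = ∏ i ∈ s, (f i).reverse := by
  induction s using Finset.cons_induction with
  | empty => rw [Finset.prod_empty, Finset.prod_empty, ← C_1, reverse_C]
  | cons a s ha ih => rw [Finset.prod_cons, reverse_mul_of_domain, ih, Finset.prod_cons]

theorem reverse_X_sub_C {R : Type*} [CommRing R] [Nontrivial R] (a : R) :
    (X - C a).reverse = 1 - C a * X := by
  rw [reverse, natDegree_X_sub_C, reflect_sub, reflect_one_X, reflect_C, pow_one]

theorem reflect_sum {R ι : Type*} [Semiring R] (N : ℕ) (s : Finset ι) (f : ι → R[X]) :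
    reflect N (∑ i ∈ s, f i) = ∑ i ∈ s, reflect N (f i) := by
  induction s using Finset.cons_induction with
  | empty => rw [Finset.sum_empty, Finset.sum_empty, reflect_zero]
  | cons a s ha ih => rw [Finset.sum_cons, Finset.sum_cons, reflect_add, ih]

theorem reflect_trunc_eq_sum {R : Type*} [Semiring R] (K : ℕ) (B : PowerSeries R) :
    reflect K (PowerSeries.trunc (K + 1) B) =
      ∑ u ∈ Finset.range (K + 1), C (PowerSeries.coeff u B) * X ^ (K - u) := by
  rw [PowerSeries.trunc_apply, ← Finset.range_eq_Ico, reflect_sum]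
  refine Finset.sum_congr rfl fun u hu => ?_
  rw [← C_mul_X_pow_eq_monomial, reflect_C_mul_X_pow,
    revAt_le (Finset.mem_range_succ_iff.mp hu)]

theorem X_pow_divByMonic_eq_reflect_trunc {R : Type*} [CommRing R] {G : R[X]} (hG : G.Monic)
    {k : ℕ} (hk : G.natDegree ≤ k) {B : PowerSeries R} (hB : (G.reverse : PowerSeries R) * B = 1) :
    X ^ k /ₘ G = reflect (k - G.natDegree) (PowerSeries.trunc (k - G.natDegree + 1) B) := by
  nontriviality R
  set N := G.natDegree
  set K := k - N
  set Q := reflect K (PowerSeries.trunc (K + 1) B)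
  have hQ : Q.natDegree ≤ K := natDegree_reflect_le.trans
    (max_le le_rfl (Nat.lt_succ_iff.mp (PowerSeries.natDegree_trunc_lt _ _)))
  have hreflect : reflect k (G * Q) = G.reverse * PowerSeries.trunc (K + 1) B := by
    rw [show k = N + K by omega, reflect_mul G Q le_rfl hQ, reflect_reflect, reverse]
  -- `G.reverse * B = 1` pins down the first `K + 1` coefficients of `reflect k (G * Q)`.
  have htrunc : PowerSeries.trunc (K + 1) (reflect k (G * Q) : PowerSeries R) = 1 := by
    rw [hreflect, coe_mul, PowerSeries.trunc_mul_trunc, hB, PowerSeries.trunc_one]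
  have hcoeff : ∀ d, N ≤ d → (G * Q).coeff d = (X ^ k : R[X]).coeff d := by
    intro d hd
    rcases le_or_gt d k with hdk | hkd
    · have hcoeff_rev := congrArg (coeff · (k - d)) htrunc
      simp only [PowerSeries.coeff_trunc, coeff_reflect, revAt_le (Nat.sub_le k d),
        Nat.sub_sub_self hdk, coeff_coe, if_pos (show k - d < K + 1 by omega)] at hcoeff_rev
      rw [hcoeff_rev, coeff_one, coeff_X_pow]
      exact if_congr (by omega) rfl rfl
    · rw [coeff_X_pow, if_neg hkd.ne', coeff_eq_zero_of_natDegree_lt]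
      exact natDegree_mul_le.trans_lt (by omega)
  refine (div_modByMonic_unique Q (X ^ k - G * Q) hG ⟨sub_add_cancel _ _, ?_⟩).1
  rw [degree_eq_natDegree hG.ne_zero, degree_lt_iff_coeff_zero]
  intro d hd
  rw [coeff_sub, hcoeff d (by exact_mod_cast hd), sub_self]

end Polynomial

namespace PowerSeries

theorem coeff_prod_eq_sum_antidiagonalTuple {R : Type*} [CommSemiring R] {n : ℕ}
    (f : Fin n → PowerSeries R) (d : ℕ) :
    coeff d (∏ i, f i) = ∑ w ∈ Finset.Nat.antidiagonalTuple n d, ∏ i, coeff (w i) (f i) := by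
  rw [coeff_prod, Finset.finsuppAntidiag, Finset.sum_map,
    ← Finset.piAntidiag_univ_fin_eq_antidiagonalTuple]
  exact Finset.sum_attach _ (fun w : Fin n → ℕ => ∏ i, coeff (w i) (f i))

theorem one_sub_C_mul_X_pow_mul_rescale_invOneSubPow {R : Type*} [CommRing R] (a : R) (m : ℕ) :
    (1 - C a * X) ^ m * rescale a (invOneSubPow R m : PowerSeries R) = 1 := by
  rw [← rescale_X, ← map_one (rescale a), ← map_sub, ← map_pow, ← map_mul,
    ← invOneSubPow_inv_eq_one_sub_pow, (invOneSubPow R m).inv_val, map_one]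

theorem coeff_rescale_invOneSubPow {R : Type*} [CommRing R] (a : R) {m : ℕ} (hm : 0 < m)
    (w : ℕ) :
    coeff w (rescale a (invOneSubPow R m : PowerSeries R)) =
      a ^ w * (m - 1 + w).choose (m - 1) := by
  rw [coeff_rescale, invOneSubPow_val_eq_mk_sub_one_add_choose_of_pos _ _ hm, coeff_mk]

end PowerSeries

/-- Quotient of `X^k` by `G(X) = ∏_{j=1}^n (X - η_j)^{m_j}` for `k ≥ N = ∑ m_j`:
`Q(X) = ∑_{u=0}^{k-N} X^{k-N-u} ∑_{w_1+⋯+w_n=u} ∏_l C(w_l+m_l-1, w_l) η_l^{w_l}`. -/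
theorem quotient_pow_by_prod_pow_linear (n k : ℕ) (η : Fin n → ℂ) (m : Fin n → ℕ)
    (hm : ∀ j, 1 ≤ m j) (hk : (∑ j, m j) ≤ k) :
    (X ^ k : ℂ[X]) /ₘ (∏ j, (X - C (η j)) ^ m j) =
      ∑ u ∈ Finset.range (k - (∑ j, m j) + 1),
        C (∑ w ∈ Finset.Nat.antidiagonalTuple n u, ∏ l,
            (((w l + m l - 1).factorial : ℂ) /
              ((w l).factorial * (m l - 1).factorial) * η l ^ w l)) *
          X ^ (k - (∑ j, m j) - u) := by
  set G : ℂ[X] := ∏ j, (X - C (η j)) ^ m j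
  have hG : G.Monic := monic_prod_of_monic _ _ fun j _ => (monic_X_sub_C _).pow _
  have hdeg : G.natDegree = ∑ j, m j := by
    simp [G, natDegree_prod_of_monic _ _ fun j _ => (monic_X_sub_C (η j)).pow (m j)]
  set B : PowerSeries ℂ :=
    ∏ j, PowerSeries.rescale (η j) (PowerSeries.invOneSubPow ℂ (m j) : PowerSeries ℂ)
  have hB : (G.reverse : PowerSeries ℂ) * B = 1 := by
    rw [reverse_prod_of_domain, ← coeToPowerSeries.ringHom_apply, map_prod,
      ← Finset.prod_mul_distrib]
    refine Finset.prod_eq_one fun j _ => ?_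
    rw [reverse_pow_of_domain, reverse_X_sub_C, map_pow, coeToPowerSeries.ringHom_apply]
    simpa using PowerSeries.one_sub_C_mul_X_pow_mul_rescale_invOneSubPow (η j) (m j)
  rw [X_pow_divByMonic_eq_reflect_trunc hG (hdeg ▸ hk) hB, hdeg, reflect_trunc_eq_sum]
  refine Finset.sum_congr rfl fun u _ => ?_
  rw [PowerSeries.coeff_prod_eq_sum_antidiagonalTuple]
  refine congrArg (C · * _) (Finset.sum_congr rfl fun w _ => Finset.prod_congr rfl fun l _ => ?_)
  have hml := hm l
  rw [PowerSeries.coeff_rescale_invOneSubPow _ hml, mul_comm, Nat.cast_add_choose,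
    mul_comm ((m l - 1).factorial : ℂ), show w l + m l - 1 = m l - 1 + w l by omega]
end

section
/- Let z ∈ B_2 ⊂ ℂ², ζ ∈ S_2 with ζ_2 ≠ 0, and 0 < r < 1 with |ζ_1| = r, |ζ_2| = √(1-r²). Then |(1 - r²) z_2| < |ζ_2| and |r² z_1 ζ_2 / (ζ_2 - (1-r²) z_2)| < r = |ζ_1|. -/
/-! By Cauchy–Schwarz, `|ζ₁| |z₁| + |ζ₂| |z₂| ≤ ‖ζ‖ ‖z‖ < 1`. Since `1 - r² = |ζ₂|²`, the
denominator satisfies `|ζ₂ - (1 - r²) z₂| ≥ |ζ₂| (1 - |ζ₂| |z₂|) > |ζ₂| r |z₁|`, and both bounds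
follow. -/

lemma mul_add_mul_lt_one {r s a b : ℝ} (hrs : r ^ 2 + s ^ 2 = 1) (hab : a ^ 2 + b ^ 2 < 1) :
    r * a + s * b < 1 := by
  nlinarith [sq_nonneg (r * b - s * a)]

lemma sq_mul_lt_self {r s a b : ℝ} (hs : 0 < s) (hra : 0 ≤ r * a) (hkey : r * a + s * b < 1) :
    s ^ 2 * b < s := by
  nlinarith

lemma sq_mul_mul_div_lt {r s a b d : ℝ} (hr : 0 < r) (hs : 0 < s) (ha : 0 ≤ a)
    (hkey : r * a + s * b < 1) (hd : s - s ^ 2 * b ≤ d) :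
    r ^ 2 * a * s / d < r := by
  have hd₀ : 0 < d := by nlinarith [mul_nonneg hr.le ha]
  rw [div_lt_iff₀ hd₀]
  nlinarith [mul_le_mul_of_nonneg_left hd hr.le, mul_lt_mul_of_pos_left hkey (mul_pos hr hs)]

theorem abs_residue_bounds_general (z₁ z₂ ζ₁ ζ₂ : ℂ) (r : ℝ) (hr0 : 0 < r)
    (hz : ‖z₁‖ ^ 2 + ‖z₂‖ ^ 2 < 1)
    (hζ : ‖ζ₁‖ ^ 2 + ‖ζ₂‖ ^ 2 = 1)
    (hζ2 : ζ₂ ≠ 0)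
    (hζ1r : ‖ζ₁‖ = r) :
    ‖(1 - (r:ℂ) ^ 2) * z₂‖ < ‖ζ₂‖ ∧
    ‖(r:ℂ) ^ 2 * z₁ * ζ₂ / (ζ₂ - (1 - (r:ℂ) ^ 2) * z₂)‖ < r := by
  have hs : 0 < ‖ζ₂‖ := norm_pos_iff.mpr hζ2
  have hrs : r ^ 2 + ‖ζ₂‖ ^ 2 = 1 := hζ1r ▸ hζ
  have hkey : r * ‖z₁‖ + ‖ζ₂‖ * ‖z₂‖ < 1 := mul_add_mul_lt_one hrs hz
  have hcoef : 1 - (r:ℂ) ^ 2 = ((‖ζ₂‖ ^ 2 : ℝ) : ℂ) := by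
    rw [eq_sub_of_add_eq' hrs]; push_cast; ring
  have hshift : ‖(1 - (r:ℂ) ^ 2) * z₂‖ = ‖ζ₂‖ ^ 2 * ‖z₂‖ := by
    rw [hcoef, norm_mul, Complex.norm_real, Real.norm_of_nonneg (by positivity)]
  refine ⟨hshift ▸ sq_mul_lt_self hs (by positivity) hkey, ?_⟩
  rw [norm_div, norm_mul, norm_mul, norm_pow, Complex.norm_real, Real.norm_of_nonneg hr0.le]
  refine sq_mul_mul_div_lt hr0 hs (norm_nonneg _) hkey ?_
  have := norm_sub_norm_le ζ₂ ((1 - (r:ℂ) ^ 2) * z₂)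
  linarith

/-- For `z` in the open unit ball of `ℂ²`, `ζ` on the unit sphere with `ζ₂ ≠ 0`,
`|ζ₁| = r`, `|ζ₂| = √(1-r²)`: `|(1-r²) z₂| < |ζ₂|` and
`|r² z₁ ζ₂ / (ζ₂ - (1-r²) z₂)| < r`. -/
theorem abs_residue_bounds (z₁ z₂ ζ₁ ζ₂ : ℂ) (r : ℝ) (hr0 : 0 < r) (hr1 : r < 1)
    (hz : ‖z₁‖ ^ 2 + ‖z₂‖ ^ 2 < 1)
    (hζ : ‖ζ₁‖ ^ 2 + ‖ζ₂‖ ^ 2 = 1)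
    (hζ2 : ζ₂ ≠ 0)
    (hζ1r : ‖ζ₁‖ = r) (hζ2r : ‖ζ₂‖ = Real.sqrt (1 - r ^ 2)) :
    ‖(1 - (r:ℂ) ^ 2) * z₂‖ < ‖ζ₂‖ ∧
    ‖(r:ℂ) ^ 2 * z₁ * ζ₂ / (ζ₂ - (1 - (r:ℂ) ^ 2) * z₂)‖ < r :=
  abs_residue_bounds_general z₁ z₂ ζ₁ ζ₂ r hr0 hz hζ hζ2 hζ1r
end
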